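/- If G = (S, P, A) is a non-recursive GMWf, then the set arts_G of target artifacts of G is finite, and a bud-free artifact t conforms to G if and only if t belongs to arts_G (∀ t bud-free, t ∴ G ⟺ t ∈ arts_G). -/
import Mathlib


/-!
Formalization of LSAWfP concepts: GMWf, artifacts, views, projections.
-/

open scoped Classical

namespace LSAWfP

/-- Scheduling annotations: sequential (`⨟`) or parallel (`∥`). -/
inductive Ann : Type
  | seq : Ann
  | par : Ann
deriving DecidableEq

/-- Grammatical symbols: base symbols (sorts of the process) together with
(re)structuring symbols, canonically named by the local scheduling
(annotation and list of son symbols) they induce. -/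
inductive Sym (α : Type) : Type
  | base : α → Sym α
  | struct : Ann → List (Sym α) → Sym α

/-- A (re)structuring symbol. -/
def Sym.isStruct {α : Type} : Sym α → Prop
  | .base _ => False
  | .struct _ _ => True

/-- A production `X₀ → X₁ ⨟ … ⨟ Xₙ` (if `ann = .seq`) or
`X₀ → X₁ ∥ … ∥ Xₙ` (if `ann = .par`); `rhs = []` encodes `X₀ → ε`. -/
structure Production (α : Type) : Type where
  lhs : Sym α
  ann : Ann
  rhs : List (Sym α)

/-- An artifact: a finite ordered tree whose nodes are labelled by grammatical
symbols, each hierarchical decomposition being annotated sequential or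
parallel; `bud s u` is a bud leaf of type `s`, unlocked iff `u = true`. -/
inductive Tree (α : Type) : Type
  | node : Sym α → Ann → List (Tree α) → Tree α
  | bud : Sym α → Bool → Tree α

namespace Tree

/-- The symbol labelling the root of an artifact. -/
def rootSym {α : Type} : Tree α → Sym α
  | .node s _ _ => s
  | .bud s _ => s

/-- The annotation of the root decomposition of an artifact. -/
def rootAnn {α : Type} : Tree α → Ann
  | .node _ a _ => a
  | .bud _ _ => .seq

end Tree

/-- A grammatical model of workflow (GMWf): symbols, productions, axioms. -/
structure PreGMWf (α : Type) : Type where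
  symbols : Set (Sym α)
  prods : Set (Production α)
  axioms : Set (Sym α)

/-- `G` is a genuine GMWf: finite sets of symbols and productions, axioms among
the symbols, and productions built on the symbols. -/
def IsGMWf {α : Type} (G : PreGMWf α) : Prop :=
  G.symbols.Finite ∧ G.prods.Finite ∧ G.axioms ⊆ G.symbols ∧
    ∀ p ∈ G.prods, p.lhs ∈ G.symbols ∧ ∀ x ∈ p.rhs, x ∈ G.symbols

/-- Local conformance of an artifact (possibly containing buds) to a GMWf:
every hierarchical decomposition is obtained from a production of matching
form, and buds are typed by symbols of the model. -/
inductive LocalOK {α : Type} (G : PreGMWf α) : Tree α → Prop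
  | bud {s : Sym α} {u : Bool} : s ∈ G.symbols → LocalOK G (.bud s u)
  | node {s : Sym α} {a : Ann} {ts : List (Tree α)} :
      (⟨s, a, ts.map Tree.rootSym⟩ : Production α) ∈ G.prods →
      (∀ t ∈ ts, LocalOK G t) → LocalOK G (.node s a ts)

/-- An artifact `t` conforms to `G` (written `t ∴ G`): its root is labelled by
an axiom and every hierarchical decomposition comes from a production. -/
def Conforms {α : Type} (G : PreGMWf α) (t : Tree α) : Prop :=
  t.rootSym ∈ G.axioms ∧ LocalOK G t

/-- Bud-free artifacts generated by the productions of `G`. -/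
inductive Gen {α : Type} (G : PreGMWf α) : Tree α → Prop
  | node {s : Sym α} {a : Ann} {ts : List (Tree α)} :
      (⟨s, a, ts.map Tree.rootSym⟩ : Production α) ∈ G.prods →
      (∀ t ∈ ts, Gen G t) → Gen G (.node s a ts)

/-- A bud-free artifact. -/
inductive BudFree {α : Type} : Tree α → Prop
  | node {s : Sym α} {a : Ann} {ts : List (Tree α)} :
      (∀ t ∈ ts, BudFree t) → BudFree (.node s a ts)

/-- `arts G`: the set of target artifacts of `G`, i.e. the bud-free artifacts
generated from an axiom of `G` by its productions. -/
def arts {α : Type} (G : PreGMWf α) : Set (Tree α) :=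
  {t | t.rootSym ∈ G.axioms ∧ Gen G t}

/-- One derivation step between symbols: `s'` occurs in the right-hand side of
a production of lhs `s`. -/
def StepSym {α : Type} (G : PreGMWf α) (s s' : Sym α) : Prop :=
  ∃ p ∈ G.prods, p.lhs = s ∧ s' ∈ p.rhs

/-- `G` is non-recursive: no symbol can derive a tree in which it reappears. -/
def NonRecursive {α : Type} (G : PreGMWf α) : Prop :=
  ∀ s : Sym α, ¬ Relation.TransGen (StepSym G) s s

/-- The artifact projection `π_V(t)` of an artifact according to a view `V`:
visible nodes are kept, invisible nodes are deleted with their projected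
sub-artifacts promoted, and fresh (re)structuring symbols are inserted
whenever the projected sons of a node mix scheduling types incompatible with
a single production form; in general it returns a forest. -/
noncomputable def proj {α : Type} (V : Set (Sym α)) : Tree α → List (Tree α)
  | .bud s u => if s ∈ V then [.bud s u] else []
  | .node s a ts =>
      let pieces : List (List (Tree α) ⊕ Tree α) :=
        ts.attach.map (fun x =>
          let ps := proj V x.1
          if x.1.rootAnn = a ∨ ps.length ≤ 1 then .inl ps
          else .inr (.node (.struct x.1.rootAnn (ps.map Tree.rootSym)) x.1.rootAnn ps))
      let flat : List (Tree α) := pieces.flatMap (fun p => p.elim id (fun w => [w]))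
      if s ∈ V then
        match flat, pieces.any Sum.isRight with
        | [Tree.node _ a1 cs], true => [Tree.node s a1 cs]
        | _, _ => [Tree.node s a flat]
      else flat
termination_by t => sizeOf t
decreasing_by
  all_goals (simp_wf; have := List.sizeOf_lt_of_mem x.2; omega)

/-- All productions used in the hierarchical decompositions of an artifact. -/
def treeProds {α : Type} : Tree α → List (Production α)
  | .bud _ _ => []
  | .node s a ts =>
      ⟨s, a, ts.map Tree.rootSym⟩ :: ts.attach.flatMap (fun x => treeProds x.1)
termination_by t => sizeOf t
decreasing_by
  all_goals (simp_wf; have := List.sizeOf_lt_of_mem x.2; omega)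

/-- All symbols occurring in an artifact. -/
def treeSyms {α : Type} : Tree α → List (Sym α)
  | .bud s _ => [s]
  | .node s _ ts => s :: ts.attach.flatMap (fun x => treeSyms x.1)
termination_by t => sizeOf t
decreasing_by
  all_goals (simp_wf; have := List.sizeOf_lt_of_mem x.2; omega)

/-- The local target artifacts for the view `V`: projections of the target
artifacts of `G`. -/
noncomputable def localArts {α : Type} (V : Set (Sym α)) (G : PreGMWf α) : Set (Tree α) :=
  {t' | ∃ t ∈ arts G, t' ∈ proj V t}

/-- The retained (re)structuring symbols of the projection of `G` along `V`. -/
noncomputable def structSymsOf {α : Type} (V : Set (Sym α)) (G : PreGMWf α) : Set (Sym α) :=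
  {s | (∃ t' ∈ localArts V G, s ∈ treeSyms t') ∧ s.isStruct}

/-- The GMWf projection `Π_V(G)`: its symbols are `V` together with the
retained restructuring symbols, its productions are those occurring in the
local target artifacts, and its axioms are the axioms of `G`. -/
noncomputable def projG {α : Type} (V : Set (Sym α)) (G : PreGMWf α) : PreGMWf α where
  symbols := V ∪ structSymsOf V G
  prods := {p | ∃ t' ∈ localArts V G, p ∈ treeProds t'}
  axioms := G.axioms

/-- The prefix relation on artifacts: `t_a ≤ t_b` iff their roots carry the
same symbol and either the root of `t_a` is a bud, or the decompositions have
the same annotation and the sons are pairwise prefixes. -/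
inductive TPrefix {α : Type} : Tree α → Tree α → Prop
  | bud {s : Sym α} {u : Bool} {t : Tree α} : t.rootSym = s → TPrefix (.bud s u) t
  | node {s : Sym α} {a : Ann} {ts ts' : List (Tree α)} :
      List.Forall₂ TPrefix ts ts' → TPrefix (.node s a ts) (.node s a ts')

/-- `Develop G t t'`: `t'` is obtained from `t` by developing some of its
unlocked buds in accordance with the productions of `G` (each developed bud of
type `X` is replaced by a tree rooted at `X` built from the productions of
`G`, whose leaves may again be buds). -/
inductive Develop {α : Type} (G : PreGMWf α) : Tree α → Tree α → Prop
  | bud_keep {s : Sym α} {u : Bool} : Develop G (.bud s u) (.bud s u)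
  | bud_dev {s : Sym α} {t : Tree α} :
      t.rootSym = s → LocalOK G t → Develop G (.bud s true) t
  | node {s : Sym α} {a : Ann} {ts ts' : List (Tree α)} :
      List.Forall₂ (Develop G) ts ts' → Develop G (.node s a ts) (.node s a ts')

/-- The accreditation of an actor: its sets of symbols readable (its view),
writable and executable. -/
structure Accreditation (α : Type) : Type where
  read : Set (Sym α)
  write : Set (Sym α)
  exec : Set (Sym α)

/-- A grammatical model of administrative workflow process: a GMWf together
with the list of accreditations of its actors. -/
structure GMAWfP (α : Type) : Type where
  gmwf : PreGMWf α
  actors : List (Accreditation α)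

/-- The axioms' visibility assumption: every axiom of the GMWf belongs to
every actor's view. -/
def AxiomsVisible {α : Type} (W : GMAWfP α) : Prop :=
  ∀ acc ∈ W.actors, W.gmwf.axioms ⊆ acc.read

/-- Well-formedness of the accreditations: each view is a set of symbols of
the model and each actor accredited in writing on a sort is accredited in
reading on it. -/
def ActorsWf {α : Type} (W : GMAWfP α) : Prop :=
  ∀ acc ∈ W.actors, acc.read ⊆ W.gmwf.symbols ∧ acc.write ⊆ acc.read

theorem Gen.localOK' {α : Type} {G : PreGMWf α} {t : Tree α} (h : Gen G t) :
    LocalOK G t := by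
  induction h with
  | node hp _ ih => exact LocalOK.node hp ih

theorem LocalOK.gen' {α : Type} {G : PreGMWf α} {t : Tree α} (h : LocalOK G t)
    (hb : BudFree t) : Gen G t := by
  induction h with
  | bud _ => cases hb
  | node hp _ ih =>
    cases hb with
    | node hb => exact Gen.node hp (fun u hu => ih u hu (hb u hu))

/-- Reversed one-step derivation. -/
def Step' {α : Type} (G : PreGMWf α) (a b : Sym α) : Prop := StepSym G b a

/-- Descendants of a symbol (within symbols of the model). -/
def desc {α : Type} (G : PreGMWf α) (s : Sym α) : Set (Sym α) :=
  {y ∈ G.symbols | Relation.TransGen (StepSym G) s y}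

theorem desc_finite {α : Type} {G : PreGMWf α} (hG : IsGMWf G) (s : Sym α) :
    (desc G s).Finite :=
  hG.1.subset (fun _ hy => hy.1)

theorem acc_step' {α : Type} {G : PreGMWf α} (hG : IsGMWf G) (hNR : NonRecursive G) :
    ∀ n (s : Sym α), (desc G s).ncard ≤ n → Acc (Step' G) s := by
  intro n
  induction n with
  | zero =>
    intro s hs
    constructor
    intro x hx
    exfalso
    obtain ⟨p, hp, hlhs, hmem⟩ := hx
    have hxsym : x ∈ G.symbols := (hG.2.2.2 p hp).2 x hmem
    have hxdesc : x ∈ desc G s :=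
      ⟨hxsym, Relation.TransGen.single ⟨p, hp, hlhs, hmem⟩⟩
    have : 0 < (desc G s).ncard :=
      (Set.ncard_pos (desc_finite hG s)).2 ⟨x, hxdesc⟩
    omega
  | succ n ih =>
    intro s hs
    constructor
    intro x hx
    obtain ⟨p, hp, hlhs, hmem⟩ := hx
    have hxsym : x ∈ G.symbols := (hG.2.2.2 p hp).2 x hmem
    have hxdesc : x ∈ desc G s :=
      ⟨hxsym, Relation.TransGen.single ⟨p, hp, hlhs, hmem⟩⟩
    apply ih
    have hsub : desc G x ⊆ desc G s \ {x} := by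
      intro y hy
      refine ⟨⟨hy.1, Relation.TransGen.head ⟨p, hp, hlhs, hmem⟩ hy.2⟩, ?_⟩
      intro hxy
      exact hNR x (hxy ▸ hy.2)
    have h1 : (desc G x).ncard ≤ (desc G s \ {x}).ncard :=
      Set.ncard_le_ncard hsub ((desc_finite hG s).subset Set.diff_subset)
    have h2 : (desc G s \ {x}).ncard < (desc G s).ncard :=
      Set.ncard_diff_singleton_lt_of_mem hxdesc (desc_finite hG s)
    omega

/-- Generated trees rooted at a given symbol. -/
def Tset {α : Type} (G : PreGMWf α) (s : Sym α) : Set (Tree α) :=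
  {t | Gen G t ∧ t.rootSym = s}

theorem listset_finite {α : Type} (T : Sym α → Set (Tree α)) :
    ∀ rs : List (Sym α), (∀ r ∈ rs, (T r).Finite) →
      {l : List (Tree α) | List.Forall₂ (fun u r => u ∈ T r) l rs}.Finite := by
  intro rs
  induction rs with
  | nil =>
    intro _
    refine (Set.finite_singleton ([] : List (Tree α))).subset ?_
    intro l hl
    cases hl
    rfl
  | cons r rs ih =>
    intro h
    refine Set.Finite.subset
      (Set.Finite.image2 List.cons (h r (by simp))
        (ih (fun r' hr' => h r' (by simp [hr'])))) ?_
    intro l hl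
    cases hl with
    | cons h1 h2 => exact Set.mem_image2_of_mem h1 h2

theorem Tset_finite {α : Type} {G : PreGMWf α} (hG : IsGMWf G) (s : Sym α)
    (hacc : Acc (Step' G) s) : (Tset G s).Finite := by
  induction hacc with
  | intro s _ ih =>
    have hprods : ({p ∈ G.prods | p.lhs = s}).Finite :=
      hG.2.1.subset (fun _ hp => hp.1)
    refine Set.Finite.subset
      (Set.Finite.biUnion hprods (fun p hp =>
        Set.Finite.image (fun l => Tree.node s p.ann l)
          (listset_finite (Tset G) p.rhs (fun r hr =>
            ih r ⟨p, hp.1, hp.2, hr⟩)))) ?_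
    intro t ht
    obtain ⟨hgen, hroot⟩ := ht
    cases hgen with
    | @node s' a ts hp hts =>
      have hs' : s' = s := hroot
      subst hs'
      refine Set.mem_biUnion (⟨hp, rfl⟩ :
        (⟨s', a, ts.map Tree.rootSym⟩ : Production α) ∈
          {p ∈ G.prods | p.lhs = s'}) ?_
      refine ⟨ts, ?_, rfl⟩
      show List.Forall₂ (fun u r => u ∈ Tset G r) ts (ts.map Tree.rootSym)
      rw [List.forall₂_map_right_iff]
      exact List.forall₂_same.2 (fun u hu => ⟨hts u hu, rfl⟩)

/-- If `G` is a non-recursive GMWf then its set of target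
artifacts is finite, and a bud-free artifact conforms to `G` iff it is a
target artifact of `G`. -/
theorem arts_finite_and_characterizes_conformance {α : Type} (G : PreGMWf α)
    (hG : IsGMWf G) (hNR : NonRecursive G) :
    (arts G).Finite ∧
    ∀ t : Tree α, BudFree t → (Conforms G t ↔ t ∈ arts G) := by
  constructor
  · have haxfin : G.axioms.Finite := hG.1.subset hG.2.2.1
    refine Set.Finite.subset
      (Set.Finite.biUnion haxfin (fun s _ =>
        Tset_finite hG s (acc_step' hG hNR _ s le_rfl))) ?_
    intro t ht
    exact Set.mem_biUnion ht.1 ⟨ht.2, rfl⟩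
  · intro t hb
    exact ⟨fun h => ⟨h.1, h.2.gen' hb⟩, fun h => ⟨h.1, h.2.localOK'⟩⟩

end LSAWfP
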